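/- arXiv:2304.01845 — 9 statements merged into one kernel-verified Lean document; each statement's English description precedes it below -/
import Mathlib

section
/- Let X be a quantum-Wajsberg algebra. Then for all x, y, z ∈ X: (1) if x ≤_Q z, y ≤_Q z and z→x = z→y, then x = y (cancellation law); (2) if x ≤_Q y, then (y→x)⊙y = x; (3) x→(z⊙y*) = (x⊙(z→y))*. -/
/-- The underlying involutive bounded BE algebra of a quantum-Wajsberg algebra. -/
class PreQW (X : Type*) where
  imp : X → X → X
  zero : X
  one : X
  imp_self : ∀ x : X, imp x x = one
  imp_one : ∀ x : X, imp x one = one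
  one_imp : ∀ x : X, imp one x = x
  exchange : ∀ x y z : X, imp x (imp y z) = imp y (imp x z)
  zero_imp : ∀ x : X, imp zero x = one
  involutive : ∀ x : X, imp (imp x zero) zero = x

namespace PreQW

variable {X : Type*} [PreQW X]

/-- `x* = x → 0`. -/
def qstar (x : X) : X := imp x zero

/-- `x ⊔ y = (x → y) → y`. -/
def qsup (x y : X) : X := imp (imp x y) y

/-- `x ⊓ y = ((x* → y*) → y*)*`. -/
def qinf (x y : X) : X := qstar (imp (imp (qstar x) (qstar y)) (qstar y))

/-- `x ⊙ y = (x → y*)*`. -/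
def qprod (x y : X) : X := qstar (imp x (qstar y))

/-- `x ≤ y` iff `x → y = 1`. -/
def qle (x y : X) : Prop := imp x y = one

/-- `x ≤_Q y` iff `x = x ⊓ y`. -/
def qleQ (x y : X) : Prop := x = qinf x y

/-- `xⁿ = x ⊙ ⋯ ⊙ x` (`n` factors), with `x⁰ = 1`. -/
def qpow (x : X) : ℕ → X
  | 0 => one
  | n + 1 => qprod x (qpow x n)

/-- A filter: nonempty, closed under `⊙`, and `x ∈ F` implies `y → x ∈ F`. -/
def IsFilter (F : Set X) : Prop :=
  F.Nonempty ∧ (∀ x ∈ F, ∀ y ∈ F, qprod x y ∈ F) ∧ (∀ x ∈ F, ∀ y : X, imp y x ∈ F)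

/-- A deductive system: contains `1` and is closed under modus ponens. -/
def IsDS (F : Set X) : Prop :=
  (one : X) ∈ F ∧ ∀ x ∈ F, ∀ y : X, imp x y ∈ F → y ∈ F

/-- A maximal filter: proper and not strictly contained in any proper filter. -/
def IsMaximal (F : Set X) : Prop :=
  IsFilter F ∧ F ≠ Set.univ ∧
    ∀ G : Set X, IsFilter G → F ⊆ G → G ≠ Set.univ → G = F

/-- The strong maximality condition: for every `x ∉ F`, `(xⁿ)* ∈ F` for some `n ≥ 1`. -/
def StrongMaxCond (F : Set X) : Prop :=
  ∀ x : X, x ∉ F → ∃ n : ℕ, 1 ≤ n ∧ qstar (qpow x n) ∈ F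

/-- A strongly maximal filter. -/
def IsStronglyMaximal (F : Set X) : Prop :=
  IsFilter F ∧ StrongMaxCond F

/-- `x ∼ y`: there is `α` with `x ≤ α ≤ x` and `y ≤ α ≤ y`. -/
def Persp (x y : X) : Prop :=
  ∃ α : X, imp x α = one ∧ imp α x = one ∧ imp y α = one ∧ imp α y = one

/-- `x ≡_F y` iff there is `λ` with `x, y ≤_Q λ` and `λ → x, λ → y ∈ F`. -/
def equivF (F : Set X) (x y : X) : Prop :=
  ∃ l : X, qleQ x l ∧ qleQ y l ∧ imp l x ∈ F ∧ imp l y ∈ F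

end PreQW

/-- A quantum-Wajsberg algebra: an involutive BE algebra satisfying axiom (QW). -/
class QW (X : Type*) extends PreQW X where
  qw : ∀ x y z : X,
    imp x (PreQW.qinf (PreQW.qinf x y) (PreQW.qinf z x)) =
      PreQW.qinf (imp x y) (imp x z)

-- auxiliary lemmas
namespace PreQW
variable {X : Type*} [PreQW X]

lemma contrapos (x y : X) : imp x y = imp (qstar y) (qstar x) := by
  unfold qstar
  rw [exchange, involutive]

lemma key (x y : X) : qprod (imp y x) y = qinf x y := by
  unfold qprod qinf
  rw [contrapos y x]

end PreQW

open PreQW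
/-- Proposition 2.3: cancellation law and related identities. -/
theorem qw_prop_2_3 {X : Type*} [QW X] (x y z : X) :
    (qleQ x z → qleQ y z → imp z x = imp z y → x = y) ∧
    (qleQ x y → qprod (imp y x) y = x) ∧
    imp x (qprod z (qstar y)) = qstar (qprod x (imp z y)) := by
  refine ⟨fun hx hy h => ?_, fun h => ?_, ?_⟩
  · have := key (X := X) x z
    rw [h, key] at this
    rw [hx, ← this, ← hy]
  · rw [key, ← h]
  · unfold qprod qstar
    rw [involutive, involutive]
end

section
/- Let X be a quantum-Wajsberg algebra. Then for all x, y ∈ X: (1) (x⊓y)*→(y⊓x)* = 1 and (x⊓y)→(y⊓x) = 1; (2) (x⊔y)*→(y⊔x)* = 1 and (x⊔y)→(y⊔x) = 1; (3) x⊓y = 0 if and only if y⊓x = 0; (4) x⊔y = 1 if and only if y⊔x = 1. -/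
namespace QWProp27Aux

open PreQW

variable {X : Type*} [QW X]

lemma ss (a : X) : qstar (qstar a) = a := PreQW.involutive a

lemma contrap (a b : X) : imp (qstar a) (qstar b) = imp b a := by
  show imp (imp a zero) (imp b zero) = imp b a
  rw [PreQW.exchange, PreQW.involutive]

lemma inf_star (a b : X) :
    qinf (qstar a) (qstar b) = qstar (qsup a b) := by
  show qstar (imp (imp (qstar (qstar a)) (qstar (qstar b))) (qstar (qstar b))) = _
  rw [ss, ss]
  rfl

lemma inf_self' (a : X) : qinf a a = a := by
  show qstar (imp (imp (qstar a) (qstar a)) (qstar a)) = a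
  rw [PreQW.imp_self, PreQW.one_imp]
  exact ss a

lemma one_inf (a : X) : qinf one a = a := by
  show imp (imp (imp (imp one zero) (imp a zero)) (imp a zero)) zero = a
  rw [PreQW.one_imp zero, PreQW.zero_imp, PreQW.one_imp]
  exact PreQW.involutive a

lemma D (a b c : X) :
    imp (qsup (qsup a b) (qsup c a)) a = qinf (imp b a) (imp c a) := by
  have h := QW.qw (qstar a) (qstar b) (qstar c)
  rw [inf_star a b, inf_star c a, inf_star (qsup a b) (qsup c a),
    contrap, contrap, contrap] at h
  exact h

lemma a_le_sup_right (a b : X) : imp a (qsup b a) = one := by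
  show imp a (imp (imp b a) a) = one
  rw [PreQW.exchange, PreQW.imp_self, PreQW.imp_one]

lemma a_le_sup_left (a b : X) : imp a (qsup a b) = one := by
  show imp a (imp (imp a b) b) = one
  rw [PreQW.exchange, PreQW.imp_self]

lemma sup_absorb (a b : X) (h : imp a b = one) : qsup a b = b := by
  show imp (imp a b) b = b
  rw [h, PreQW.one_imp]

lemma sup_zero (a : X) : qsup a zero = a := by
  show imp (imp a zero) zero = a
  exact PreQW.involutive a

lemma T (c a : X) : imp (qsup c a) a = imp c a := by
  have h := D a zero c
  rw [sup_zero, PreQW.zero_imp, one_inf] at h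
  rwa [sup_absorb a (qsup c a) (a_le_sup_right a c)] at h

lemma tsa (a b : X) : qsup (qsup b a) a = qsup b a := by
  show imp (imp (qsup b a) a) a = qsup b a
  rw [T b a]
  rfl

lemma F1 (a b : X) :
    imp (qsup (qsup a b) (qsup b a)) a = imp b a := by
  have h := D a b (qsup b a)
  rwa [tsa, T, inf_self'] at h

lemma H1 (a b : X) :
    qinf (imp (qsup a b) a) (imp b a) = imp b a := by
  have h := D a (qsup a b) (qsup b a)
  rw [sup_absorb a (qsup a b) (a_le_sup_left a b), tsa, T] at h
  rw [F1] at h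
  exact h.symm

lemma inf_le_left (p q : X) : imp (qinf p q) p = one := by
  rw [← contrap p (qinf p q)]
  show imp (qstar p) (qstar (qstar (imp (imp (qstar p) (qstar q)) (qstar q)))) = one
  rw [ss, PreQW.exchange, PreQW.imp_self]

lemma main (a b : X) : imp (qsup a b) (qsup b a) = one := by
  have K : imp (imp b a) (imp (qsup a b) a) = one := by
    have h := inf_le_left (imp (qsup a b) a) (imp b a)
    rwa [H1] at h
  show imp (qsup a b) (imp (imp b a) a) = one
  rw [PreQW.exchange]
  exact K

lemma star_inf (a b : X) :
    qstar (qinf a b) = qsup (qstar a) (qstar b) :=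
  ss (qsup (qstar a) (qstar b))

lemma inf_le (a b : X) : imp (qinf a b) (qinf b a) = one := by
  have h := contrap (qsup (qstar a) (qstar b)) (qsup (qstar b) (qstar a))
  rw [main (qstar b) (qstar a)] at h
  exact h

end QWProp27Aux

open PreQW
/-- Proposition 2.7. -/
theorem qw_prop_2_7 {X : Type*} [QW X] (x y : X) :
    (imp (qstar (qinf x y)) (qstar (qinf y x)) = one ∧
      imp (qinf x y) (qinf y x) = one) ∧
    (imp (qstar (qsup x y)) (qstar (qsup y x)) = one ∧
      imp (qsup x y) (qsup y x) = one) ∧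
    (qinf x y = zero ↔ qinf y x = zero) ∧
    (qsup x y = one ↔ qsup y x = one) := by
  refine ⟨⟨?_, QWProp27Aux.inf_le x y⟩, ⟨?_, QWProp27Aux.main x y⟩, ?_, ?_⟩
  · rw [QWProp27Aux.star_inf, QWProp27Aux.star_inf]
    exact QWProp27Aux.main _ _
  · have h := QWProp27Aux.contrap (qsup x y) (qsup y x)
    rwa [QWProp27Aux.main y x] at h
  · constructor <;> intro h
    · have h3 := QWProp27Aux.inf_le y x
      rw [h] at h3
      calc qinf y x = qstar (qstar (qinf y x)) := (QWProp27Aux.ss _).symm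
        _ = qstar one := by rw [show qstar (qinf y x) = one from h3]
        _ = zero := PreQW.one_imp zero
    · have h3 := QWProp27Aux.inf_le x y
      rw [h] at h3
      calc qinf x y = qstar (qstar (qinf x y)) := (QWProp27Aux.ss _).symm
        _ = qstar one := by rw [show qstar (qinf x y) = one from h3]
        _ = zero := PreQW.one_imp zero
  · constructor <;> intro h
    · have h2 := QWProp27Aux.main x y
      rw [h, PreQW.one_imp] at h2
      exact h2
    · have h2 := QWProp27Aux.main y x
      rw [h, PreQW.one_imp] at h2
      exact h2
end

section
/- Let X be a quantum-Wajsberg algebra. Then for all x, y, z ∈ X: (1) x→(y→z) = (x⊙y)→z; (2) x ≤_Q y→z implies x⊙y ≤ z; (3) x⊙y ≤ z implies x ≤ y→z; (4) (x→y)⊙x ≤ y; (5) x ≤_Q y implies x⊙z ≤_Q y⊙z. -/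
open PreQW

section myAux

lemma my_star_star {X : Type*} [PreQW X] (x : X) : qstar (qstar x) = x :=
  PreQW.involutive x

lemma my_imp_star {X : Type*} [PreQW X] (x y : X) :
    imp x (qstar y) = imp y (qstar x) :=
  PreQW.exchange x y PreQW.zero

lemma my_star_imp_star {X : Type*} [PreQW X] (x y : X) :
    imp (qstar x) (qstar y) = imp y x := by
  rw [my_imp_star, my_star_star]

lemma my_prod_imp {X : Type*} [PreQW X] (x y z : X) :
    imp (qprod x y) z = imp x (imp y z) := by
  show imp (qstar (imp x (qstar y))) z = imp x (imp y z)
  conv_lhs => rw [← my_star_star z]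
  rw [my_star_imp_star, PreQW.exchange, my_star_imp_star]

lemma my_inf_one {X : Type*} [PreQW X] (s : X) : qinf s PreQW.one = s := by
  show qstar (imp (imp (qstar s) (qstar (PreQW.one : X))) (qstar (PreQW.one : X))) = s
  have h1 : qstar (PreQW.one : X) = PreQW.zero := PreQW.one_imp PreQW.zero
  rw [h1, PreQW.involutive]
  exact my_star_star s

lemma my_one_inf {X : Type*} [PreQW X] (a : X) : qinf PreQW.one a = a := by
  show qstar (imp (imp (qstar (PreQW.one : X)) (qstar a)) (qstar a)) = a
  have h1 : qstar (PreQW.one : X) = PreQW.zero := PreQW.one_imp PreQW.zero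
  rw [h1, PreQW.zero_imp, PreQW.one_imp]
  exact my_star_star a

lemma my_inf_inf {X : Type*} [PreQW X] (s c : X) :
    qinf s (qinf c s) = qinf c s := by
  have h : imp (qstar s) (qstar (qinf c s)) = PreQW.one := by
    show imp (qstar s) (qstar (qstar (imp (imp (qstar c) (qstar s)) (qstar s)))) = PreQW.one
    rw [my_star_star, PreQW.exchange, PreQW.imp_self, PreQW.imp_one]
  show qstar (imp (imp (qstar s) (qstar (qinf c s))) (qstar (qinf c s))) = qinf c s
  rw [h, PreQW.one_imp]
  exact my_star_star _

lemma my_T {X : Type*} [QW X] (s c : X) : imp s (qinf c s) = imp s c := by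
  have h := QW.qw s PreQW.one c
  rw [my_inf_one, PreQW.imp_one, my_one_inf, my_inf_inf] at h
  exact h

lemma my_K {X : Type*} [QW X] (u v : X) :
    imp (imp (imp u v) v) v = imp u v := by
  have h := my_T (qstar v) (qstar u)
  rw [my_star_imp_star] at h
  have h2 : qinf (qstar u) (qstar v) = qstar (imp (imp u v) v) := by
    show qstar (imp (imp (qstar (qstar u)) (qstar (qstar v))) (qstar (qstar v))) = _
    rw [my_star_star, my_star_star]
  rw [h2, my_star_imp_star] at h
  exact h

lemma my_leQ_le {X : Type*} [PreQW X] (x a : X) (h : x = qinf x a) :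
    imp x a = PreQW.one := by
  have hs : qstar x = imp (imp (qstar x) (qstar a)) (qstar a) := by
    conv_lhs => rw [h]
    show qstar (qstar (imp (imp (qstar x) (qstar a)) (qstar a))) = _
    rw [my_star_star]
  have h2 : imp (qstar a) (qstar x) = PreQW.one := by
    rw [hs, PreQW.exchange, PreQW.imp_self, PreQW.imp_one]
  rw [← my_star_imp_star a x]
  exact h2

end myAux

/-- Proposition 2.8. -/
theorem qw_prop_2_8 {X : Type*} [QW X] (x y z : X) :
    (imp x (imp y z) = imp (qprod x y) z) ∧
    (qleQ x (imp y z) → qle (qprod x y) z) ∧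
    (qle (qprod x y) z → qle x (imp y z)) ∧
    qle (qprod (imp x y) x) y ∧
    (qleQ x y → qleQ (qprod x z) (qprod y z)) := by
  refine ⟨(my_prod_imp x y z).symm, ?_, ?_, ?_, ?_⟩
  · intro h
    show imp (qprod x y) z = PreQW.one
    rw [my_prod_imp]
    exact my_leQ_le x (imp y z) h
  · intro h
    show imp x (imp y z) = PreQW.one
    rw [← my_prod_imp]
    exact h
  · show imp (qprod (imp x y) x) y = PreQW.one
    rw [my_prod_imp, PreQW.imp_self]
  · intro h
    have h' : x = qinf x y := h
    have hs : qstar x = imp (imp (qstar x) (qstar y)) (qstar y) := by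
      conv_lhs => rw [h']
      show qstar (qstar (imp (imp (qstar x) (qstar y)) (qstar y))) = _
      rw [my_star_star]
    have hs' : qstar x = imp (imp y x) (qstar y) := by
      rw [hs, my_star_imp_star]
    have hx : x = qprod (imp y x) y := by
      show x = qstar (imp (imp y x) (qstar y))
      rw [← hs', my_star_star]
    have key : imp x (qstar z) = imp (imp y x) (imp y (qstar z)) := by
      conv_lhs => rw [hx]
      exact my_prod_imp (imp y x) y (qstar z)
    have inner : imp x (qstar z)
        = imp (imp (imp x (qstar z)) (imp y (qstar z))) (imp y (qstar z)) := by
      rw [key]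
      exact (my_K (imp y x) (imp y (qstar z))).symm
    show qstar (imp x (qstar z))
        = qstar (imp (imp (qstar (qstar (imp x (qstar z))))
            (qstar (qstar (imp y (qstar z))))) (qstar (qstar (imp y (qstar z)))))
    rw [my_star_star (imp x (qstar z)), my_star_star (imp y (qstar z))]
    exact congrArg PreQW.qstar inner
end

section
/- Let X be a quantum-Wajsberg algebra. A nonempty subset F ⊆ X is a filter of X if and only if it satisfies condition (F₁) (x, y ∈ F implies x⊙y ∈ F) and condition (F₃): x ∈ F, y ∈ X and x ≤_Q y imply y ∈ F. -/
open PreQW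

section Aux
variable {X : Type*} [QW X]

lemma qstar_qstar (x : X) : qstar (qstar x) = x := PreQW.involutive x

lemma contra (x y : X) : imp x y = imp (qstar y) (qstar x) := by
  conv_lhs => rw [show y = imp (qstar y) PreQW.zero from (PreQW.involutive y).symm]
  exact PreQW.exchange x (qstar y) PreQW.zero

lemma qinf_zero (x : X) : qinf x PreQW.zero = PreQW.zero := by
  unfold qinf qstar
  rw [PreQW.zero_imp, PreQW.imp_one, PreQW.one_imp]

lemma zero_qinf (x : X) : qinf PreQW.zero x = PreQW.zero := by
  unfold qinf qstar
  rw [PreQW.zero_imp, PreQW.one_imp, PreQW.imp_self, PreQW.one_imp]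

lemma L1 (x z : X) : qinf (qstar x) (imp x z) = qstar x := by
  have h := QW.qw x PreQW.zero z
  rw [qinf_zero, zero_qinf] at h
  have hz : imp x PreQW.zero = qstar x := rfl
  rw [hz] at h
  exact h.symm

lemma L1' (x y : X) : qinf x (imp y x) = x := by
  have h := L1 (qstar x) (qstar y)
  rw [qstar_qstar, ← contra] at h
  exact h

lemma qstar_of_qleQ {x y : X} (h : qleQ x y) :
    qstar x = imp (imp (qstar x) (qstar y)) (qstar y) := by
  conv_lhs => rw [h]
  exact qstar_qstar _

lemma L2 {x y : X} (h : qleQ x y) : imp (imp y x) x = y := by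
  have h1 := L1' (qstar y) (imp (qstar x) (qstar y))
  rw [← qstar_of_qleQ h] at h1
  have h2 : qinf (qstar y) (qstar x) = qstar (imp (imp y x) x) := by
    unfold qinf
    rw [qstar_qstar, qstar_qstar]
  rw [h2] at h1
  calc imp (imp y x) x = qstar (qstar (imp (imp y x) x)) := (qstar_qstar _).symm
    _ = qstar (qstar y) := by rw [h1]
    _ = y := qstar_qstar y

end Aux

/-- Proposition 3.4: a nonempty subset is a filter iff it satisfies (F₁) and (F₃). -/
theorem qw_prop_3_4 {X : Type*} [QW X] (F : Set X) (hF : F.Nonempty) :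
    IsFilter F ↔
      ((∀ x ∈ F, ∀ y ∈ F, qprod x y ∈ F) ∧
        ∀ x ∈ F, ∀ y : X, qleQ x y → y ∈ F) := by
  constructor
  · rintro ⟨-, h1, h2⟩
    refine ⟨h1, fun x hx y hxy => ?_⟩
    have := h2 x hx (imp y x)
    rwa [L2 hxy] at this
  · rintro ⟨h1, h3⟩
    exact ⟨hF, h1, fun x hx y => h3 x hx (imp y x) (L1' x y).symm⟩
end

section
/- Let X be a quantum-Wajsberg algebra. Every deductive system of X is a filter of X. -/
open PreQW

lemma imp_qstar {X : Type*} [PreQW X] (a b : X) :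
    imp a (qstar b) = imp b (qstar a) := by
  unfold qstar; rw [exchange]

open PreQW
/-- Proposition 3.7: every deductive system is a filter. -/
theorem qw_prop_3_7 {X : Type*} [QW X] (F : Set X) (hF : IsDS F) :
    IsFilter F := by
  obtain ⟨h1, hmp⟩ := hF
  refine ⟨⟨one, h1⟩, ?_, ?_⟩
  · intro x hx y hy
    have key : imp y (imp x (qprod x y)) = one := by
      unfold qprod
      rw [imp_qstar x (imp x (qstar y)), exchange,
        show imp y (qstar x) = imp x (qstar y) from imp_qstar y x, PreQW.imp_self]
    have step1 : imp x (qprod x y) ∈ F := hmp y hy _ (key ▸ h1)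
    exact hmp x hx _ step1
  · intro x hx y
    have : imp x (imp y x) = one := by rw [exchange, PreQW.imp_self, PreQW.imp_one]
    exact hmp x hx _ (this ▸ h1)
end

section
/- Let X be a quantum-Wajsberg algebra and F a deductive system of X. For all x, y ∈ X the following are equivalent: (a) x ≡_F y; (b) there exist α, β ∈ F with x ≤_Q α, y ≤_Q β and α→x = β→y; (c) there exist α, β ∈ F with x ≤_Q β→y and y ≤_Q α→x. -/
open PreQW

namespace PreQW

variable {X : Type*} [PreQW X]

lemma star_star' (x : X) : qstar (qstar x) = x := PreQW.involutive x

lemma imp_qstar (p q : X) : imp p (qstar q) = imp q (qstar p) := PreQW.exchange p q zero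

lemma contra' (p q : X) : imp (qstar q) (qstar p) = imp p q := by
  rw [imp_qstar, star_star']

lemma qinf_eq (x y : X) : qinf x y = qstar (imp (imp y x) (qstar y)) := by
  unfold qinf
  rw [contra']

lemma qstar_one : qstar (PreQW.one : X) = PreQW.zero := PreQW.one_imp zero
lemma qstar_zero : qstar (PreQW.zero : X) = PreQW.one := PreQW.zero_imp zero

lemma qinf_zero_right (u : X) : qinf u PreQW.zero = PreQW.zero := by
  unfold qinf
  show qstar (imp (imp (qstar u) (qstar zero)) (qstar zero)) = zero
  rw [qstar_zero, PreQW.imp_one, qstar_one]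

lemma qinf_zero_left (u : X) : qinf PreQW.zero u = PreQW.zero := by
  unfold qinf
  show qstar (imp (imp (qstar zero) (qstar u)) (qstar u)) = zero
  rw [qstar_zero, PreQW.one_imp, PreQW.imp_self, qstar_one]

end PreQW

namespace QW

open PreQW

variable {X : Type*} [QW X]

/-- Key instance of the (QW) axiom with `y := 0`. -/
lemma lemmaD (u z : X) : qinf (qstar u) (imp u z) = qstar u := by
  have h := QW.qw u PreQW.zero z
  rw [qinf_zero_right, qinf_zero_left] at h
  have : imp u PreQW.zero = qstar u := rfl
  rw [this] at h
  exact h.symm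

/-- Absorption: `y ≤_Q z → y` for all `z`. -/
lemma lemmaU (y z : X) : qinf y (imp z y) = y := by
  have h := lemmaD (qstar y) (qstar z)
  rwa [star_star', contra'] at h

lemma qleQ_imp (y z : X) : qleQ y (imp z y) := (lemmaU y z).symm

/-- If `x ≤_Q l` then `(l → x) → x = l`. -/
lemma key {x l : X} (h : qleQ x l) : imp (imp l x) x = l := by
  set a := imp l x with ha
  have hx : qstar x = imp a (qstar l) := by
    have := congrArg qstar h
    rw [qinf_eq] at this
    rw [this, star_star']
  have hD := lemmaD l x
  rw [qinf_eq] at hD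
  rw [← ha] at hD
  have h2 : imp a x = imp (imp a (qstar l)) (qstar a) := by
    rw [← contra' a x, hx]
  rw [h2]
  have := congrArg qstar hD
  rwa [star_star', star_star'] at this

end QW
/-- Proposition 4.2: characterizations of the relation `≡_F`. -/
theorem qw_prop_4_2 {X : Type*} [QW X] (F : Set X) (hF : IsDS F) (x y : X) :
    (equivF F x y ↔
      ∃ α ∈ F, ∃ β ∈ F, qleQ x α ∧ qleQ y β ∧ imp α x = imp β y) ∧
    (equivF F x y ↔
      ∃ α ∈ F, ∃ β ∈ F, qleQ x (imp β y) ∧ qleQ y (imp α x)) := by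
  obtain ⟨h1, hMP⟩ := hF
  have hup : ∀ u ∈ F, ∀ v : X, imp u v = PreQW.one → v ∈ F := by
    intro u hu v huv
    exact hMP u hu v (by rw [huv]; exact h1)
  constructor
  · constructor
    · rintro ⟨l, hx, hy, hlx, hly⟩
      exact ⟨imp l x, hlx, imp l y, hly, QW.qleQ_imp x l, QW.qleQ_imp y l,
        by rw [QW.key hx, QW.key hy]⟩
    · rintro ⟨a, ha, b, hb, hxa, hyb, hab⟩
      refine ⟨imp a x, QW.qleQ_imp x a, ?_, ?_, ?_⟩
      · rw [hab]; exact QW.qleQ_imp y b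
      · rw [QW.key hxa]; exact ha
      · rw [hab, QW.key hyb]; exact hb
  · constructor
    · rintro ⟨l, hx, hy, hlx, hly⟩
      exact ⟨imp l x, hlx, imp l y, hly, by rw [QW.key hy]; exact hx,
        by rw [QW.key hx]; exact hy⟩
    · rintro ⟨a, ha, b, hb, hx, hy⟩
      refine ⟨imp b y, hx, QW.qleQ_imp y b, ?_, ?_⟩
      · -- imp (imp b y) x ∈ F, via two modus ponens from b and a
        have e1 : imp b (imp a (imp (imp b y) x)) = PreQW.one := by
          rw [PreQW.exchange a (imp b y) x, PreQW.exchange b (imp b y) (imp a x)]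
          conv_lhs => rw [← QW.key hy]
          rw [PreQW.exchange b (imp (imp a x) y) y,
            PreQW.exchange (imp b y) (imp (imp a x) y) (imp b y),
            PreQW.imp_self, PreQW.imp_one]
        have s1 : imp a (imp (imp b y) x) ∈ F := hup b hb _ e1
        exact hMP a ha _ s1
      · -- imp (imp b y) y ∈ F since b ≤ it
        have e2 : imp b (imp (imp b y) y) = PreQW.one := by
          rw [PreQW.exchange b (imp b y) y]; exact PreQW.imp_self (imp b y)
        exact hup b hb _ e2
end

section
/- Let X be a commutative quantum-Wajsberg algebra and F a deductive system of X. Then for all x, y ∈ X: x ≡_F y if and only if x→y ∈ F and y→x ∈ F. -/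
open PreQW

section Aux

variable {X : Type*} [PreQW X]

lemma aux_contrapos (x l : X) : imp x l = imp (qstar l) (qstar x) := by
  unfold qstar
  conv_lhs => rw [← involutive l]
  rw [exchange]

lemma aux_self_sup (w b : X) : imp w (imp (imp w b) b) = one := by
  rw [exchange, PreQW.imp_self]

lemma aux_antitone (hcomm : ∀ x y : X, qsup x y = qsup y x)
    (x l y : X) (h : imp x l = one) :
    imp (imp l y) (imp x y) = one := by
  rw [exchange]
  rw [show imp (imp l y) y = imp (imp y l) l from hcomm l y, exchange, h, PreQW.imp_one]

lemma aux_antisym (hcomm : ∀ x y : X, qsup x y = qsup y x)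
    {x y : X} (h1 : imp x y = one) (h2 : imp y x = one) : x = y := by
  calc x = imp one x := (one_imp x).symm
    _ = imp (imp y x) x := by rw [h2]
    _ = imp (imp x y) y := hcomm y x
    _ = imp one y := by rw [h1]
    _ = y := one_imp y

lemma aux_triple (hcomm : ∀ x y : X, qsup x y = qsup y x)
    (u b : X) : imp (imp (imp u b) b) b = imp u b := by
  refine aux_antisym hcomm ?_ ?_
  · exact aux_antitone hcomm u (imp (imp u b) b) b (aux_self_sup u b)
  · exact aux_self_sup (imp u b) b

lemma aux_qleQ_of_le (hcomm : ∀ x y : X, qsup x y = qsup y x)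
    {x l : X} (h : imp x l = one) : qleQ x l := by
  unfold qleQ qinf
  have h1 : imp (qstar l) (qstar x) = one := (aux_contrapos x l) ▸ h
  have h2 : imp (imp (qstar x) (qstar l)) (qstar l)
      = imp (imp (qstar l) (qstar x)) (qstar x) := hcomm (qstar x) (qstar l)
  rw [h2, h1, one_imp]
  exact (involutive x).symm

lemma aux_le_of_qleQ (hcomm : ∀ x y : X, qsup x y = qsup y x)
    {x l : X} (h : qleQ x l) : imp x l = one := by
  unfold qleQ qinf at h
  have hx : qstar x = imp (imp (qstar l) (qstar x)) (qstar x) := by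
    conv_lhs => rw [h]
    unfold qstar
    rw [involutive]
    exact hcomm (imp x zero) (imp l zero)
  have : imp (qstar l) (qstar x) = one := by
    conv_lhs => rw [hx]
    rw [exchange, PreQW.imp_self]
  rw [aux_contrapos x l, this]

end Aux

/-- Proposition 4.4: in a commutative QW algebra, `x ≡_F y` iff
`x → y ∈ F` and `y → x ∈ F`. -/
theorem qw_prop_4_4 {X : Type*} [QW X]
    (hcomm : ∀ x y : X, qsup x y = qsup y x)
    (F : Set X) (hF : IsDS F) (x y : X) :
    equivF F x y ↔ (imp x y ∈ F ∧ imp y x ∈ F) := by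
  constructor
  · rintro ⟨l, hxl, hyl, hlx, hly⟩
    have hx : imp x l = one := aux_le_of_qleQ hcomm hxl
    have hy : imp y l = one := aux_le_of_qleQ hcomm hyl
    constructor
    · refine hF.2 _ hly _ ?_
      rw [aux_antitone hcomm x l y hx]; exact hF.1
    · refine hF.2 _ hlx _ ?_
      rw [aux_antitone hcomm y l x hy]; exact hF.1
  · rintro ⟨hxy, hyx⟩
    refine ⟨imp (imp x y) y, ?_, ?_, ?_, ?_⟩
    · exact aux_qleQ_of_le hcomm (aux_self_sup x y)
    · refine aux_qleQ_of_le hcomm ?_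
      rw [exchange, PreQW.imp_self, PreQW.imp_one]
    · have : imp (imp (imp x y) y) x = imp y x := by
        rw [show imp (imp x y) y = imp (imp y x) x from hcomm x y,
          aux_triple hcomm y x]
      rw [this]; exact hyx
    · rw [aux_triple hcomm x y]; exact hxy
end

section
/- Let X be a quantum-Wajsberg algebra and F a deductive system of X. If x ≡_F y and u ≡_F v, then x⊙u ≡_F y⊙v. -/
section QWAux
open PreQW

variable {X : Type*} [PreQW X]

lemma qw_star_star (a : X) : qstar (qstar a) = a := PreQW.involutive a

lemma qw_imp_swap_star (a b : X) : imp a (qstar b) = imp b (qstar a) :=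
  PreQW.exchange a b PreQW.zero

lemma qw_contrap (a b : X) : imp a b = imp (qstar b) (qstar a) := by
  conv_lhs => rw [← qw_star_star b]
  exact qw_imp_swap_star a (qstar b)

lemma qw_prod_star (a b : X) : qstar (qprod a b) = imp a (qstar b) :=
  qw_star_star _

lemma qw_prod_imp (p q r : X) : imp (qprod p q) r = imp p (imp q r) := by
  rw [qw_contrap (qprod p q) r, qw_prod_star, PreQW.exchange, ← qw_contrap]

lemma qw_prod_comm (a b : X) : qprod a b = qprod b a := by
  unfold qprod
  rw [qw_imp_swap_star]

lemma qw_prod_assoc (a b c : X) : qprod (qprod a b) c = qprod a (qprod b c) := by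
  show qstar (imp (qprod a b) (qstar c)) = qstar (imp a (qstar (qprod b c)))
  rw [qw_prod_imp, qw_prod_star]

lemma qw_inf_eq_prod (x l : X) : qinf x l = qprod l (imp l x) := by
  unfold qinf qprod
  rw [qw_imp_swap_star l (imp l x), qw_contrap l x]

lemma qw_inf_one (a : X) : qinf a PreQW.one = a := by
  unfold qinf
  rw [show qstar (PreQW.one : X) = PreQW.zero from PreQW.one_imp _]
  show qstar (imp (imp (qstar a) PreQW.zero) PreQW.zero) = a
  rw [show imp (imp (qstar a) PreQW.zero) PreQW.zero = qstar (qstar (qstar a)) from rfl,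
    qw_star_star, qw_star_star]

lemma qw_one_inf (a : X) : qinf PreQW.one a = a := by
  unfold qinf
  rw [show qstar (PreQW.one : X) = PreQW.zero from PreQW.one_imp _,
    PreQW.zero_imp, PreQW.one_imp]
  exact qw_star_star a

lemma qw_inf_le (z x : X) : imp (qinf z x) x = PreQW.one := by
  rw [qw_contrap (qinf z x) x]
  unfold qinf
  rw [qw_star_star, PreQW.exchange, PreQW.imp_self, PreQW.imp_one]

lemma qw_inf_of_le (m x : X) (h : imp m x = PreQW.one) : qinf x m = m := by
  unfold qinf
  rw [← qw_contrap m x, h, PreQW.one_imp]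
  exact qw_star_star m

lemma qw_inf_absorb (z x : X) : qinf x (qinf z x) = qinf z x :=
  qw_inf_of_le _ _ (qw_inf_le z x)

end QWAux

section QWAux2
open PreQW
variable {X : Type*} [QW X]

lemma qw_L1 (x z : X) : imp x (qinf z x) = imp x z := by
  have h := QW.qw x PreQW.one z
  rwa [qw_inf_one, qw_inf_absorb, PreQW.imp_one, qw_one_inf] at h

lemma qw_T (u w : X) : imp (imp (imp u w) w) w = imp u w := by
  have h := qw_L1 (qstar w) (qstar u)
  rw [show qinf (qstar u) (qstar w)
        = qstar (imp (imp u w) w) from by unfold qinf; rw [qw_star_star, qw_star_star],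
    qw_imp_swap_star, qw_star_star, ← qw_contrap] at h
  exact h

lemma qw_prod_leQ (a b : X) : qinf (qprod a b) b = qprod a b := by
  unfold qinf
  rw [show qstar (qprod a b) = imp a (qstar b) from qw_prod_star a b, qw_T]
  rfl

end QWAux2

open PreQW
/-- Proposition 4.7: `≡_F` is compatible with `⊙`. -/
theorem qw_prop_4_7 {X : Type*} [QW X] (F : Set X) (hF : IsDS F)
    (x y u v : X) (h₁ : equivF F x y) (h₂ : equivF F u v) :
    equivF F (qprod x u) (qprod y v) := by
  obtain ⟨l₁, hx, hy, hpx, hpy⟩ := h₁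
  obtain ⟨l₂, hu, hv, hqu, hqv⟩ := h₂
  set L := qprod l₁ l₂ with hL
  have ex : x = qprod l₁ (imp l₁ x) := by
    exact Eq.trans hx (qw_inf_eq_prod x l₁)
  have ey : y = qprod l₁ (imp l₁ y) := by
    exact Eq.trans hy (qw_inf_eq_prod y l₁)
  have eu : u = qprod l₂ (imp l₂ u) := by
    exact Eq.trans hu (qw_inf_eq_prod u l₂)
  have ev : v = qprod l₂ (imp l₂ v) := by
    exact Eq.trans hv (qw_inf_eq_prod v l₂)
  have rearr : ∀ a b p q : X,
      qprod (qprod a p) (qprod b q) = qprod (qprod p q) (qprod a b) := by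
    intro a b p q
    rw [qw_prod_assoc, qw_prod_assoc, ← qw_prod_assoc p b q, qw_prod_comm p b,
      qw_prod_assoc b p q, ← qw_prod_assoc a b (qprod p q),
      qw_prod_comm (qprod a b) (qprod p q), qw_prod_assoc]
  have eq₁ : qprod x u = qprod (qprod (imp l₁ x) (imp l₂ u)) L := by
    conv_lhs => rw [ex, eu]
    exact rearr l₁ l₂ (imp l₁ x) (imp l₂ u)
  have eq₂ : qprod y v = qprod (qprod (imp l₁ y) (imp l₂ v)) L := by
    conv_lhs => rw [ey, ev]
    exact rearr l₁ l₂ (imp l₁ y) (imp l₂ v)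
  have mem : ∀ a b : X, imp l₁ a ∈ F → imp l₂ b ∈ F →
      qprod a b = qprod (qprod (imp l₁ a) (imp l₂ b)) L → imp L (qprod a b) ∈ F := by
    intro a b ha hb heq
    have key : imp (imp l₁ a) (imp (imp l₂ b) (imp L (qprod a b))) = PreQW.one := by
      rw [← qw_prod_imp, ← qw_prod_imp, ← heq]
      exact PreQW.imp_self _
    have s1 : imp (imp l₂ b) (imp L (qprod a b)) ∈ F :=
      hF.2 _ ha _ (key ▸ hF.1)
    exact hF.2 _ hb _ s1
  refine ⟨L, ?_, ?_, ?_, ?_⟩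
  · show qprod x u = qinf (qprod x u) L
    rw [eq₁, qw_prod_leQ]
  · show qprod y v = qinf (qprod y v) L
    rw [eq₂, qw_prod_leQ]
  · exact mem x u hpx hqu eq₁
  · exact mem y v hpy hqv eq₂
end

section
/- Let X be a quantum-Wajsberg algebra and F a deductive system of X. The following are equivalent: (a) F is prime, i.e., for all x, y ∈ X, x→y ∈ F or y→x ∈ F; (b) for all x, y ∈ X, x⊔y ∈ F implies x ∈ F or y ∈ F. -/
namespace QWProofAux

open PreQW

section BE
variable {X : Type*} [PreQW X]

lemma star_star (x : X) : qstar (qstar x) = x := PreQW.involutive x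

lemma contrap (x y : X) : imp x y = imp (qstar y) (qstar x) := by
  conv_lhs => rw [← PreQW.involutive y]
  exact PreQW.exchange x (imp y zero) zero

lemma star_imp (x y : X) : imp (qstar x) y = imp (qstar y) x := by
  rw [contrap (qstar x) y, star_star]

lemma imp_star (x y : X) : imp x (qstar y) = imp y (qstar x) :=
  PreQW.exchange x y zero

lemma star_one : (qstar (one : X)) = zero := PreQW.one_imp zero

lemma star_zero : (qstar (zero : X)) = one := PreQW.zero_imp zero

lemma inf_one (x : X) : qinf x one = x := by
  simp only [qinf, qsup, star_one]
  rw [PreQW.involutive, star_star]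

lemma one_inf (x : X) : qinf one x = x := by
  simp only [qinf, qsup, star_one]
  rw [PreQW.zero_imp, PreQW.one_imp, star_star]

lemma inf_zero (x : X) : qinf x zero = zero := by
  simp only [qinf, qsup, star_zero]
  rw [PreQW.imp_one, star_one]

lemma zero_inf (x : X) : qinf zero x = zero := by
  simp only [qinf, qsup, star_zero]
  rw [PreQW.one_imp, PreQW.imp_self, star_one]

lemma inf_eq (u v : X) : qinf u v = qstar (imp v (qstar (imp v u))) := by
  show qstar (imp (imp (qstar u) (qstar v)) (qstar v)) = qstar (imp v (qstar (imp v u)))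
  rw [← contrap v u]
  exact congrArg qstar (PreQW.exchange (imp v u) v zero)

lemma inf_absorb (x y : X) : qinf x (qinf y x) = qinf y x := by
  have h1 : imp (qstar x) (imp (imp (qstar y) (qstar x)) (qstar x)) = one := by
    rw [PreQW.exchange, PreQW.imp_self, PreQW.imp_one]
  have h2 : qstar (qinf y x) = imp (imp (qstar y) (qstar x)) (qstar x) :=
    star_star (imp (imp (qstar y) (qstar x)) (qstar x))
  show qstar (imp (imp (qstar x) (qstar (qinf y x))) (qstar (qinf y x))) = qinf y x
  rw [h2, h1, PreQW.one_imp]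
  rfl

end BE

section QWsec
variable {X : Type*} [QW X]

lemma qw_aux1 (x z : X) : imp x (qinf x (qinf z x)) = imp x z := by
  have h := QW.qw x one z
  rwa [inf_one, PreQW.imp_one, one_inf] at h

lemma qw_aux2 (x y : X) : imp x (qinf (qinf x y) x) = imp x y := by
  have h := QW.qw x y one
  rwa [one_inf, PreQW.imp_one, inf_one] at h

lemma inf_star_imp (x w : X) : qinf (qstar x) (imp x w) = qstar x := by
  have h := QW.qw x zero w
  rw [inf_zero, zero_inf] at h
  exact h.symm

lemma imp_inf_left (x z : X) : imp x (qinf z x) = imp x z := by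
  rw [← inf_absorb x z]
  exact qw_aux1 x z

lemma imp_inf (x y : X) : imp x (qinf x y) = imp x y := by
  have h := imp_inf_left x (qinf x y)
  rw [← h]
  exact qw_aux2 x y

lemma sup_imp (a b : X) : imp (imp (imp a b) b) a = imp b a := by
  have hm := imp_inf (qstar a) (qstar b)
  simp only [qinf, qsup, star_star] at hm
  rw [contrap (imp (imp a b) b) a, hm, ← contrap b a]

lemma t_lemma (x y : X) : imp (imp x y) (imp y x) = imp y x := by
  conv_lhs => rw [← sup_imp x y]
  rw [PreQW.exchange (imp x y) (imp (imp x y) y) x]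
  rw [contrap (imp x y) x]
  rw [PreQW.exchange (imp (imp x y) y) (qstar x) (qstar (imp x y))]
  rw [imp_star (imp (imp x y) y) (imp x y)]
  rw [star_imp x (imp (imp x y) (qstar (imp (imp x y) y)))]
  rw [← inf_eq y (imp x y)]
  have h8 := inf_star_imp (qstar y) (qstar x)
  rw [star_star, ← contrap x y] at h8
  rw [h8]

lemma prelinear (x y : X) : qsup (imp x y) (imp y x) = one := by
  show imp (imp (imp x y) (imp y x)) (imp y x) = one
  rw [t_lemma, PreQW.imp_self]

lemma sup_le_sup (x y : X) : imp (qsup x y) (qsup y x) = one := by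
  show imp (imp (imp x y) y) (imp (imp y x) x) = one
  rw [PreQW.exchange (imp (imp x y) y) (imp y x) x, sup_imp x y, PreQW.imp_self]

end QWsec

end QWProofAux

open PreQW
/-- Proposition 5.5: characterization of prime deductive systems. -/
theorem qw_prop_5_5 {X : Type*} [QW X] (F : Set X) (hF : IsDS F) :
    (∀ x y : X, imp x y ∈ F ∨ imp y x ∈ F) ↔
      ∀ x y : X, qsup x y ∈ F → x ∈ F ∨ y ∈ F := by
  obtain ⟨h1, hmp⟩ := hF
  constructor
  · intro hprime x y hs
    rcases hprime x y with h | h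
    · right
      exact hmp _ h y hs
    · left
      have h2 : imp (qsup x y) (qsup y x) ∈ F := by
        rw [QWProofAux.sup_le_sup]; exact h1
      have h3 : qsup y x ∈ F := hmp _ hs _ h2
      exact hmp _ h x h3
  · intro hsplit x y
    apply hsplit
    rw [QWProofAux.prelinear]
    exact h1
end
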